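/- arXiv:1307.1857 — 2 statements merged into one kernel-verified Lean document; each statement's English description precedes it below -/
import Mathlib

section
/- Let n ≥ 1 be an integer, let g : (0,∞) → (0,∞) be measurable with s^{n−1} g(s) integrable on (0,∞), and set G(λ) = (2π^{n/2}/Γ(n/2)) ∫_0^λ s^{n−1} g(s) ds. Let α, β be reals with β ≤ α < n. If the function r ↦ g(1/r) belongs to OR(β,α), then the function r ↦ G(1/r) belongs to OR(β−n, α−n) and G(1/r) ≍ g(1/r)/r^n as r → ∞. -/
open MeasureTheory Filter Real Set Asymptotics

/-- `L ∈ OR(β,α)`: O-regular variation at infinity with Matuszewska indices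
between `β` and `α`. -/
def MemOR (L : ℝ → ℝ) (β α : ℝ) : Prop :=
  ∀ δ : ℝ, 0 < δ → ∃ C : ℝ, 0 < C ∧ ∃ D : ℝ, 0 < D ∧ ∃ lam₀ : ℝ, 0 < lam₀ ∧
    ∀ t : ℝ, 1 ≤ t → ∀ lam : ℝ, lam₀ ≤ lam →
      D * t ^ (β - δ) ≤ L (lam * t) / L lam ∧ L (lam * t) / L lam ≤ C * t ^ (α + δ)

/-!
For small `μ`, the O-regular variation of `r ↦ g (1 / r)` compares `g s` with `g μ` for
`0 < s ≤ μ`: from above by `C (μ / s) ^ (α + δ) g μ`, which keeps `s ^ (n - 1) g s` dominated by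
an integrable power since `α + δ < n`, and from below by a constant multiple of `g μ` on
`(μ / 2, μ]`. Hence `∫₀^μ s ^ (n - 1) g s ds ≍ μ ^ n g μ` as `μ → 0⁺`, i.e.
`G (1 / r) ≍ g (1 / r) / r ^ n` as `r → ∞`, and O-regular variation passes to `G (1 / r)`
because it is stable under `≍` and shifts both indices by `-n` under division by `r ^ n`.
-/

open Topology

namespace MemOR

variable {L M : ℝ → ℝ} {β α : ℝ}

theorem div_rpow (hL : MemOR L β α) (γ : ℝ) :
    MemOR (fun r => L r / r ^ γ) (β - γ) (α - γ) := by
  intro δ hδ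
  obtain ⟨C, hC, D, hD, lam₀, hlam₀, hbound⟩ := hL δ hδ
  refine ⟨C, hC, D, hD, lam₀, hlam₀, fun t ht lam hlam => ?_⟩
  have ht0 : 0 < t := one_pos.trans_le ht
  have hlam0 : 0 < lam := hlam₀.trans_le hlam
  have hratio : L (lam * t) / (lam * t) ^ γ / (L lam / lam ^ γ)
      = L (lam * t) / L lam / t ^ γ := by
    rw [mul_rpow hlam0.le ht0.le]
    field_simp [(rpow_pos_of_pos hlam0 γ).ne']
  have hsplit (e : ℝ) : t ^ (e - γ) = t ^ e / t ^ γ := rpow_sub ht0 e γ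
  have htγ := rpow_pos_of_pos ht0 γ
  obtain ⟨hlow, hupp⟩ := hbound t ht lam hlam
  rw [hratio, sub_right_comm, hsplit, sub_add_eq_add_sub, hsplit, mul_div_assoc',
    mul_div_assoc']
  exact ⟨div_le_div_of_nonneg_right hlow htγ.le, div_le_div_of_nonneg_right hupp htγ.le⟩

theorem congr_isTheta (hL : MemOR L β α) (hLM : L =Θ[atTop] M)
    (hLpos : ∀ᶠ r in atTop, 0 < L r) (hMnonneg : ∀ᶠ r in atTop, 0 ≤ M r) :
    MemOR M β α := by
  intro δ hδ
  obtain ⟨C, hC, D, hD, lam₀, hlam₀, hbound⟩ := hL δ hδ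
  obtain ⟨a, ha, hLa⟩ := hLM.isBigO.exists_pos
  obtain ⟨b, hb, hMb⟩ := hLM.isBigO_symm.exists_pos
  obtain ⟨r₀, hr₀⟩ := eventually_atTop.1 (hLpos.and (hMnonneg.and (hLa.bound.and hMb.bound)))
  have hcmp : ∀ r ≥ r₀, 0 < L r ∧ 0 < M r ∧ L r ≤ a * M r ∧ M r ≤ b * L r := by
    intro r hr
    obtain ⟨hL, hM, hLM, hML⟩ := hr₀ r hr
    simp only [Real.norm_of_nonneg hL.le, Real.norm_of_nonneg hM] at hLM hML
    exact ⟨hL, lt_of_le_of_ne hM fun h => by rw [← h] at hLM; linarith, hLM, hML⟩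
  refine ⟨a * b * C, by positivity, D / (a * b), by positivity, max lam₀ r₀,
    lt_max_of_lt_left hlam₀, fun t ht lam hlam => ?_⟩
  have hlam0 : lam₀ ≤ lam := le_of_max_le_left hlam
  have hlamt : lam ≤ lam * t := le_mul_of_one_le_right (hlam₀.le.trans hlam0) ht
  obtain ⟨hL1, hM1, hLM1, hML1⟩ := hcmp lam (le_of_max_le_right hlam)
  obtain ⟨hL2, hM2, hLM2, hML2⟩ := hcmp (lam * t) ((le_of_max_le_right hlam).trans hlamt)
  obtain ⟨hlow, hupp⟩ := hbound t ht lam hlam0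
  constructor
  · calc D / (a * b) * t ^ (β - δ) ≤ L (lam * t) / L lam / (a * b) := by
          rw [div_mul_eq_mul_div]; exact div_le_div_of_nonneg_right hlow (by positivity)
      _ = (L (lam * t) / a) / (b * L lam) := by field_simp
      _ ≤ M (lam * t) / M lam :=
          div_le_div₀ hM2.le ((div_le_iff₀' ha).2 hLM2) hM1 hML1
  · calc M (lam * t) / M lam ≤ (b * L (lam * t)) / (L lam / a) :=
          div_le_div₀ (by positivity) hML2 (by positivity) ((div_le_iff₀' ha).2 hLM1)
      _ = a * b * (L (lam * t) / L lam) := by field_simp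
      _ ≤ a * b * C * t ^ (α + δ) := by
          rw [mul_assoc (a * b)]; exact mul_le_mul_of_nonneg_left hupp (by positivity)

end MemOR

theorem min_one_rpow_le_rpow {t b γ : ℝ} (ht : 1 ≤ t) (htb : t ≤ b) :
    min 1 (b ^ γ) ≤ t ^ γ := by
  rcases le_total 0 γ with hγ | hγ
  · exact (min_le_left _ _).trans (one_le_rpow ht hγ)
  · exact (min_le_right _ _).trans (rpow_le_rpow_of_nonpos (by linarith) htb hγ)

theorem MemOR.bounds_comp_one_div {g : ℝ → ℝ} {β α δ : ℝ}
    (hg : MemOR (fun r => g (1 / r)) β α) (hgpos : ∀ s, 0 < s → 0 < g s) (hδ : 0 < δ) :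
    ∃ C > 0, ∃ D > 0, ∃ μ₀ > 0, ∀ μ ∈ Ioc 0 μ₀, ∀ s ∈ Ioc 0 μ,
      D * (μ / s) ^ (β - δ) * g μ ≤ g s ∧ g s ≤ C * (μ / s) ^ (α + δ) * g μ := by
  obtain ⟨C, hC, D, hD, lam₀, hlam₀, hbound⟩ := hg δ hδ
  refine ⟨C, hC, D, hD, 1 / lam₀, by positivity, fun μ hμ s hs => ?_⟩
  have hgμ := hgpos μ hμ.1
  have hlam : lam₀ ≤ 1 / μ := (le_one_div hlam₀ hμ.1).2 hμ.2
  obtain ⟨hlow, hupp⟩ := hbound (μ / s) ((one_le_div hs.1).2 hs.2) (1 / μ) hlam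
  have hinv : 1 / (1 / μ * (μ / s)) = s := by field_simp [hμ.1.ne', hs.1.ne']
  simp only [hinv, one_div_one_div] at hlow hupp
  exact ⟨(le_div_iff₀ hgμ).1 hlow, (div_le_iff₀ hgμ).1 hupp⟩

section IntegralBounds

variable {g : ℝ → ℝ} {m : ℕ} {μ : ℝ}

theorem setIntegral_Ioc_pow_mul_le {a C : ℝ} (ha : a < m + 1) (hμ : 0 < μ)
    (hint : IntegrableOn (fun s => s ^ m * g s) (Ioc 0 μ))
    (hg : ∀ s ∈ Ioc 0 μ, g s ≤ C * (μ / s) ^ a * g μ) :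
    ∫ s in Ioc 0 μ, s ^ m * g s ≤ C / (m + 1 - a) * μ ^ (m + 1) * g μ := by
  set p : ℝ := m - a
  have hp : -1 < p := by linarith
  have hpt : ∀ s ∈ Ioc 0 μ, s ^ m * g s ≤ C * μ ^ a * g μ * s ^ p := by
    intro s hs
    calc s ^ m * g s ≤ s ^ m * (C * (μ / s) ^ a * g μ) :=
          mul_le_mul_of_nonneg_left (hg s hs) (pow_nonneg hs.1.le m)
      _ = C * μ ^ a * g μ * s ^ p := by
          rw [div_rpow hμ.le hs.1.le, rpow_sub hs.1, rpow_natCast]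
          field_simp [(rpow_pos_of_pos hs.1 a).ne']
  have hint_rpow : IntegrableOn (fun s => C * μ ^ a * g μ * s ^ p) (Ioc 0 μ) :=
    ((intervalIntegrable_iff_integrableOn_Ioc_of_le hμ.le).1
      (intervalIntegral.intervalIntegrable_rpow' hp)).const_mul _
  have hrpow : ∫ s in Ioc 0 μ, s ^ p = μ ^ (p + 1) / (p + 1) := by
    rw [← intervalIntegral.integral_of_le hμ.le, integral_rpow (Or.inl hp),
      zero_rpow (by linarith)]
    ring
  have hμpow : μ ^ a * μ ^ (p + 1) = μ ^ (m + 1) := by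
    rw [← rpow_add hμ, show a + (p + 1) = ((m + 1 : ℕ) : ℝ) by push_cast; ring, rpow_natCast]
  calc ∫ s in Ioc 0 μ, s ^ m * g s ≤ ∫ s in Ioc 0 μ, C * μ ^ a * g μ * s ^ p :=
        setIntegral_mono_on hint hint_rpow measurableSet_Ioc hpt
    _ = C / (m + 1 - a) * μ ^ (m + 1) * g μ := by
        rw [integral_const_mul, hrpow, ← hμpow, show p + 1 = m + 1 - a by ring]
        ring

theorem le_setIntegral_Ioc_pow_mul {D : ℝ} (hD : 0 ≤ D) (hμ : 0 < μ)
    (hint : IntegrableOn (fun s => s ^ m * g s) (Ioc 0 μ))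
    (hgnonneg : ∀ s ∈ Ioc 0 μ, 0 ≤ g s) (hg : ∀ s ∈ Ioc (μ / 2) μ, D * g μ ≤ g s) :
    D / 2 ^ (m + 1) * μ ^ (m + 1) * g μ ≤ ∫ s in Ioc 0 μ, s ^ m * g s := by
  have hsub : Ioc (μ / 2) μ ⊆ Ioc 0 μ := Ioc_subset_Ioc (by positivity) le_rfl
  have hgμ : 0 ≤ g μ := hgnonneg μ ⟨hμ, le_rfl⟩
  have hpt : ∀ s ∈ Ioc (μ / 2) μ, (μ / 2) ^ m * (D * g μ) ≤ s ^ m * g s := fun s hs =>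
    mul_le_mul (pow_le_pow_left₀ (by positivity) hs.1.le m) (hg s hs) (by positivity)
      (pow_nonneg (hsub hs).1.le m)
  have hnonneg : 0 ≤ᵐ[volume.restrict (Ioc 0 μ)] fun s => s ^ m * g s :=
    (ae_restrict_mem measurableSet_Ioc).mono fun s hs =>
      mul_nonneg (pow_nonneg hs.1.le m) (hgnonneg s hs)
  calc D / 2 ^ (m + 1) * μ ^ (m + 1) * g μ
        = (μ / 2) ^ m * (D * g μ) * volume.real (Ioc (μ / 2) μ) := by
        rw [Real.volume_real_Ioc_of_le (by linarith), div_pow, pow_succ]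
        field_simp
        ring
    _ ≤ ∫ s in Ioc (μ / 2) μ, s ^ m * g s :=
        setIntegral_ge_of_const_le_real measurableSet_Ioc (by simp) hpt (hint.mono_set hsub)
    _ ≤ ∫ s in Ioc 0 μ, s ^ m * g s := setIntegral_mono_set hint hnonneg hsub.eventuallyLE

end IntegralBounds

theorem isTheta_of_le_of_le {ι : Type*} {l : Filter ι} {f g : ι → ℝ} {a b : ℝ} (ha : 0 < a)
    (h : ∀ᶠ x in l, 0 < g x ∧ a * g x ≤ f x ∧ f x ≤ b * g x) : f =Θ[l] g := by
  refine ⟨IsBigO.of_bound b ?_, IsBigO.of_bound a⁻¹ ?_⟩ <;>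
    filter_upwards [h] with x ⟨hg, hlow, hupp⟩ <;>
    rw [norm_of_nonneg ((mul_pos ha hg).le.trans hlow), norm_of_nonneg hg.le]
  · exact hupp
  · exact (le_inv_mul_iff₀ ha).2 hlow

theorem setIntegral_Ioc_pow_mul_isTheta {g : ℝ → ℝ} {m : ℕ} {β α : ℝ} (hα : α < m + 1)
    (hgpos : ∀ s, 0 < s → 0 < g s) (hgint : IntegrableOn (fun s => s ^ m * g s) (Ioi 0))
    (hg : MemOR (fun r => g (1 / r)) β α) :
    (fun μ => ∫ s in Ioc 0 μ, s ^ m * g s) =Θ[𝓝[>] 0] fun μ => μ ^ (m + 1) * g μ := by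
  -- any `δ > 0` with `α + δ < m + 1` would do
  set δ : ℝ := (m + 1 - α) / 2 with hδ
  obtain ⟨C, hC, D, hD, μ₀, hμ₀, hbound⟩ := hg.bounds_comp_one_div hgpos (δ := δ) (by positivity)
  set D' := D * min 1 ((2 : ℝ) ^ (β - δ))
  have hD' : 0 < D' := mul_pos hD (lt_min one_pos (by positivity))
  have hbounds : ∀ μ ∈ Ioc 0 μ₀,
      D' / 2 ^ (m + 1) * (μ ^ (m + 1) * g μ) ≤ ∫ s in Ioc 0 μ, s ^ m * g s ∧
      ∫ s in Ioc 0 μ, s ^ m * g s ≤ C / (m + 1 - (α + δ)) * (μ ^ (m + 1) * g μ) := by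
    intro μ hμ
    have hint : IntegrableOn (fun s => s ^ m * g s) (Ioc 0 μ) := hgint.mono_set fun s hs => hs.1
    rw [← mul_assoc, ← mul_assoc]
    refine ⟨le_setIntegral_Ioc_pow_mul hD'.le hμ.1 hint (fun s hs => (hgpos s hs.1).le)
      fun s hs => ?_, setIntegral_Ioc_pow_mul_le (by linarith [hδ]) hμ.1 hint
        fun s hs => (hbound μ hμ s hs).2⟩
    have hs0 : 0 < s := (half_pos hμ.1).trans hs.1
    have hratio := min_one_rpow_le_rpow (b := 2) (γ := β - δ) ((one_le_div hs0).2 hs.2)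
      ((div_le_iff₀ hs0).2 (by linarith [hs.1]))
    calc D' * g μ ≤ D * (μ / s) ^ (β - δ) * g μ :=
          mul_le_mul_of_nonneg_right (mul_le_mul_of_nonneg_left hratio hD.le) (hgpos μ hμ.1).le
      _ ≤ g s := (hbound μ hμ s ⟨hs0, hs.2⟩).1
  exact isTheta_of_le_of_le (div_pos hD' (pow_pos two_pos (m + 1))) <|
    eventually_of_mem (Ioc_mem_nhdsGT hμ₀) fun μ hμ =>
      ⟨mul_pos (pow_pos hμ.1 _) (hgpos μ hμ.1), hbounds μ hμ⟩

theorem or_density_to_distribution_general (n : ℕ) (hn : 1 ≤ n)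
    (g : ℝ → ℝ) (hgpos : ∀ s : ℝ, 0 < s → 0 < g s)
    (hgint : IntegrableOn (fun s => s ^ (n - 1) * g s) (Set.Ioi (0 : ℝ)))
    (G : ℝ → ℝ)
    (hG : ∀ lam : ℝ, G lam = 2 * π ^ ((n : ℝ) / 2) / Real.Gamma ((n : ℝ) / 2) *
      ∫ s in Set.Ioc (0 : ℝ) lam, s ^ (n - 1) * g s)
    (α β : ℝ) (hα : α < n)
    (hg : MemOR (fun r => g (1 / r)) β α) :
    MemOR (fun r => G (1 / r)) (β - n) (α - n) ∧
      ((fun r => G (1 / r)) =O[atTop] fun r => g (1 / r) / r ^ (n : ℝ)) ∧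
      ((fun r => g (1 / r) / r ^ (n : ℝ)) =O[atTop] fun r => G (1 / r)) := by
  obtain ⟨m, rfl⟩ : ∃ m, n = m + 1 := ⟨n - 1, (Nat.sub_add_cancel hn).symm⟩
  simp only [Nat.add_sub_cancel] at hgint hG
  have hc : 0 < 2 * π ^ ((m + 1 : ℕ) / 2 : ℝ) / Gamma ((m + 1 : ℕ) / 2 : ℝ) := by
    have := Gamma_pos_of_pos (s := ((m + 1 : ℕ) / 2 : ℝ)) (by positivity)
    positivity
  have hone_div : Tendsto (fun r : ℝ => 1 / r) atTop (𝓝[>] 0) := by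
    simpa only [one_div] using tendsto_inv_atTop_nhdsGT_zero
  have hGΘ : (fun r => G (1 / r)) =Θ[atTop] fun r => g (1 / r) / r ^ ((m + 1 : ℕ) : ℝ) := by
    simp only [hG, isTheta_const_mul_left hc.ne']
    have hI := setIntegral_Ioc_pow_mul_isTheta (by exact_mod_cast hα) hgpos hgint hg
    refine IsTheta.trans_eventuallyEq ⟨hI.1.comp_tendsto hone_div, hI.2.comp_tendsto hone_div⟩
      (Eventually.of_forall fun r => ?_)
    change (1 / r) ^ (m + 1) * g (1 / r) = g (1 / r) / r ^ ((m + 1 : ℕ) : ℝ)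
    rw [rpow_natCast, one_div_pow, one_div_mul_eq_div]
  have hGnonneg : ∀ᶠ r in atTop, 0 ≤ G (1 / r) := Eventually.of_forall fun r => by
    rw [hG]
    exact mul_nonneg hc.le (setIntegral_nonneg measurableSet_Ioc fun s hs =>
      mul_nonneg (pow_nonneg hs.1.le _) (hgpos s hs.1).le)
  have hgpos' : ∀ᶠ r in atTop, 0 < g (1 / r) / r ^ ((m + 1 : ℕ) : ℝ) := by
    filter_upwards [eventually_gt_atTop 0] with r hr
    exact div_pos (hgpos _ (by positivity)) (by positivity)
  exact ⟨(hg.div_rpow _).congr_isTheta hGΘ.symm hgpos' hGnonneg, hGΘ.isBigO, hGΘ.isBigO_symm⟩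

theorem or_density_to_distribution (n : ℕ) (hn : 1 ≤ n)
    (g : ℝ → ℝ) (hgpos : ∀ s : ℝ, 0 < s → 0 < g s) (hgmeas : Measurable g)
    (hgint : IntegrableOn (fun s => s ^ (n - 1) * g s) (Set.Ioi (0 : ℝ)))
    (G : ℝ → ℝ)
    (hG : ∀ lam : ℝ, G lam = 2 * π ^ ((n : ℝ) / 2) / Real.Gamma ((n : ℝ) / 2) *
      ∫ s in Set.Ioc (0 : ℝ) lam, s ^ (n - 1) * g s)
    (α β : ℝ) (hβα : β ≤ α) (hα : α < n)
    (hg : MemOR (fun r => g (1 / r)) β α) :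
    MemOR (fun r => G (1 / r)) (β - n) (α - n) ∧
      ((fun r => G (1 / r)) =O[atTop] fun r => g (1 / r) / r ^ (n : ℝ)) ∧
      ((fun r => g (1 / r) / r ^ (n : ℝ)) =O[atTop] fun r => G (1 / r)) :=
  or_density_to_distribution_general n hn g hgpos hgint G hG α β hα hg
end

section
/- Let a > 0 and r > 0, and let v(r) = {x ∈ ℝ³ : ‖x‖ < r} be the open ball of radius r in ℝ³. Then ∫_{v(r)} ∫_{v(r)} 2(1 − cos(a‖x−y‖))/‖x−y‖² dx dy = (4π²/a⁴) (2r⁴a⁴ − 2r²a² + 2ar sin(2ar) − 1 + cos(2ar)), where the (Lebesgue) integration is over x, y ∈ v(r) (the integrand being defined arbitrarily, e.g. as a², on the null set x = y). -/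
/-!
Since the integrand depends only on `x - y`, the substitution `w = x - y` turns the double integral
into `∫ B(‖w‖) · vol (v(r) ∩ (v(r) + w)) dw`. Two balls of radius `r` whose centres are at distance
`s ≤ 2r` meet in a lens of volume `π (4r³/3 - r²s + s³/12)`: rotate the line of centres onto the
first axis and integrate the areas of the discs cut out by the planes orthogonal to it. Polar
coordinates then leave the elementary integral `4π ∫₀^{2r} s² B(s) π (4r³/3 - r²s + s³/12) ds`.
-/

open MeasureTheory Filter Real Set Metric

open scoped Classical

theorem integral_integral_eq_toReal_lintegral_lintegral {α β : Type*} [MeasurableSpace α]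
    [MeasurableSpace β] {μ : Measure α} {ν : Measure β} [IsFiniteMeasure μ] [IsFiniteMeasure ν]
    {f : α → β → ℝ} (hf : Measurable (Function.uncurry f)) (hf_nonneg : ∀ x y, 0 ≤ f x y)
    {C : ℝ} (hfC : ∀ x y, f x y ≤ C) :
    ∫ x, ∫ y, f x y ∂ν ∂μ = (∫⁻ x, ∫⁻ y, ENNReal.ofReal (f x y) ∂ν ∂μ).toReal := by
  have inner (x : α) : ∫ y, f x y ∂ν = (∫⁻ y, ENNReal.ofReal (f x y) ∂ν).toReal :=
    integral_eq_lintegral_of_nonneg_ae (.of_forall (hf_nonneg x))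
      (hf.comp measurable_prodMk_left).aestronglyMeasurable
  have inner_lt_top (x : α) : ∫⁻ y, ENNReal.ofReal (f x y) ∂ν < ⊤ :=
    calc ∫⁻ y, ENNReal.ofReal (f x y) ∂ν ≤ ∫⁻ _, ENNReal.ofReal C ∂ν :=
          lintegral_mono fun y ↦ ENNReal.ofReal_le_ofReal (hfC x y)
      _ < ⊤ := by
        rw [lintegral_const]; exact ENNReal.mul_lt_top ENNReal.ofReal_lt_top (measure_lt_top _ _)
  simp only [inner]
  exact integral_toReal (ENNReal.measurable_ofReal.comp hf).lintegral_prod_right'.aemeasurable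
    (.of_forall inner_lt_top)

theorem lintegral_lintegral_sub_eq {G : Type*} [MeasurableSpace G] [AddCommGroup G]
    [MeasurableAdd₂ G] [MeasurableNeg G] (μ : Measure G) [SFinite μ] [μ.IsAddLeftInvariant]
    [μ.IsNegInvariant] {A : Set G} (hA : MeasurableSet A) {k : G → ENNReal} (hk : Measurable k) :
    ∫⁻ x in A, ∫⁻ y in A, k (x - y) ∂μ ∂μ = ∫⁻ w, k w * μ (A ∩ (· - w) ⁻¹' A) ∂μ := by
  have inner (x : G) : ∫⁻ y in A, k (x - y) ∂μ = ∫⁻ w, k w * A.indicator 1 (x - w) ∂μ := by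
    rw [← lintegral_indicator hA, ← lintegral_sub_left_eq_self _ x]
    congr with w
    by_cases hw : x - w ∈ A <;> simp [hw]
  simp_rw [inner]
  rw [lintegral_lintegral_swap]
  · congr with w
    have hAw : MeasurableSet ((· - w) ⁻¹' A) := measurable_sub_const w hA
    change ∫⁻ x in A, k w * ((· - w) ⁻¹' A).indicator 1 x ∂μ = _
    rw [lintegral_const_mul _ (measurable_one.indicator hAw), lintegral_indicator_one hAw,
      Measure.restrict_apply hAw, inter_comm]
  · exact (hk.comp measurable_snd).aemeasurable.mul
      ((measurable_one.indicator hA).comp measurable_sub).aemeasurable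

theorem volume_setOf_norm_sq_lt_fin_two (s : ℝ) :
    volume {u : EuclideanSpace ℝ (Fin 2) | ‖u‖ ^ 2 < s} = ENNReal.ofReal (π * s) := by
  have hball : {u : EuclideanSpace ℝ (Fin 2) | ‖u‖ ^ 2 < s} = ball 0 (√s) := by
    ext u; simp [Real.lt_sqrt (norm_nonneg u)]
  rw [hball, EuclideanSpace.volume_ball_fin_two, ← ENNReal.ofReal_pow (sqrt_nonneg s),
    ← ENNReal.ofReal_mul (by positivity), mul_comm]
  rcases le_total s 0 with hs | hs
  · rw [sqrt_eq_zero'.2 hs,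
      ENNReal.ofReal_eq_zero.2 (mul_nonpos_of_nonneg_of_nonpos pi_pos.le hs)]
    simp
  · rw [sq_sqrt hs]

theorem volume_setOf_norm_sq_lt_prod (φ : ℝ → ℝ) (hφ : Measurable φ) :
    volume {p : ℝ × EuclideanSpace ℝ (Fin 2) | ‖p.2‖ ^ 2 < φ p.1} =
      ∫⁻ t, ENNReal.ofReal (π * φ t) := by
  have hmeas : MeasurableSet {p : ℝ × EuclideanSpace ℝ (Fin 2) | ‖p.2‖ ^ 2 < φ p.1} :=
    measurableSet_lt (by fun_prop) (hφ.comp measurable_fst)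
  rw [Measure.volume_eq_prod, Measure.prod_apply hmeas]
  simp_rw [← volume_setOf_norm_sq_lt_fin_two]
  rfl

def euclideanHeadTail (n : ℕ) :
    EuclideanSpace ℝ (Fin (n + 1)) ≃ᵐ ℝ × EuclideanSpace ℝ (Fin n) :=
  (MeasurableEquiv.toLp 2 _).symm.trans <| (MeasurableEquiv.piFinSuccAbove (fun _ ↦ ℝ) 0).trans <|
    .prodCongr (.refl ℝ) (MeasurableEquiv.toLp 2 _)

theorem euclideanHeadTail_apply {n : ℕ} (x : EuclideanSpace ℝ (Fin (n + 1))) :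
    euclideanHeadTail n x = (x 0, WithLp.toLp 2 fun i ↦ x i.succ) := rfl

theorem measurePreserving_euclideanHeadTail (n : ℕ) :
    MeasurePreserving (euclideanHeadTail n) := by
  rw [Measure.volume_eq_prod]
  exact (PiLp.volume_preserving_ofLp _).trans <|
    (volume_preserving_piFinSuccAbove (fun _ ↦ ℝ) 0).trans <|
      (MeasurePreserving.id volume).prod (PiLp.volume_preserving_toLp _)

theorem norm_sq_eq_sq_head_add_norm_sq_tail {n : ℕ} (x : EuclideanSpace ℝ (Fin (n + 1))) :
    ‖x‖ ^ 2 = x 0 ^ 2 + ‖(WithLp.toLp 2 fun i ↦ x i.succ : EuclideanSpace ℝ (Fin n))‖ ^ 2 := by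
  simp [EuclideanSpace.norm_sq_eq, Fin.sum_univ_succ]

theorem volume_ball_inter_ball_congr {E : Type*} [NormedAddCommGroup E] [InnerProductSpace ℝ E]
    [FiniteDimensional ℝ E] [MeasurableSpace E] [BorelSpace E] (r : ℝ) {z z' : E}
    (h : ‖z‖ = ‖z'‖) :
    volume (ball (0 : E) r ∩ ball z r) = volume (ball (0 : E) r ∩ ball z' r) := by
  set ρ := (ℝ ∙ (z' - z))ᗮ.reflection
  have hρ : ρ z' = z := Submodule.reflection_sub h.symm
  rw [← ρ.measurePreserving.measure_preimage
    (measurableSet_ball.inter measurableSet_ball).nullMeasurableSet]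
  congr 1
  ext x
  simp [dist_eq_norm, ← hρ]

theorem volume_ball_inter_ball_smul_single {r : ℝ} (hr : 0 ≤ r) (d : ℝ) :
    volume (ball (0 : EuclideanSpace ℝ (Fin 3)) r ∩ ball (d • EuclideanSpace.single 0 1) r) =
      ∫⁻ t, ENNReal.ofReal (π * (r ^ 2 - max (t ^ 2) ((t - d) ^ 2))) := by
  set φ : ℝ → ℝ := fun t ↦ r ^ 2 - max (t ^ 2) ((t - d) ^ 2)
  have hφ : Measurable φ := Continuous.measurable (by fun_prop)
  have hlens : ball (0 : EuclideanSpace ℝ (Fin 3)) r ∩ ball (d • EuclideanSpace.single 0 1) r =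
      euclideanHeadTail 2 ⁻¹' {p | ‖p.2‖ ^ 2 < φ p.1} := by
    ext x
    have hx₀ := norm_sq_eq_sq_head_add_norm_sq_tail x
    have hx₁ := norm_sq_eq_sq_head_add_norm_sq_tail (x - d • EuclideanSpace.single 0 1)
    simp only [PiLp.sub_apply, PiLp.smul_apply, PiLp.single_apply, Fin.succ_ne_zero, if_true,
      if_false, smul_eq_mul, mul_one, mul_zero, sub_zero] at hx₁
    simp only [mem_inter_iff, mem_ball, dist_eq_norm, sub_zero, mem_preimage, mem_ofPred_eq,
      ← pow_lt_pow_iff_left₀ (norm_nonneg _) hr two_ne_zero, hx₀, hx₁, φ,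
      euclideanHeadTail_apply, lt_sub_iff_add_lt', ← max_add_add_right, max_lt_iff]
  rw [hlens, (measurePreserving_euclideanHeadTail 2).measure_preimage_equiv]
  exact volume_setOf_norm_sq_lt_prod φ hφ

theorem lintegral_lens_profile {r d : ℝ} (hd : 0 ≤ d) (hdr : d ≤ 2 * r) :
    ∫⁻ t, ENNReal.ofReal (π * (r ^ 2 - max (t ^ 2) ((t - d) ^ 2))) =
      ENNReal.ofReal (π * (4 * r ^ 3 / 3 - r ^ 2 * d + d ^ 3 / 12)) := by
  set ψ : ℝ → ℝ := fun t ↦ π * (r ^ 2 - max (t ^ 2) ((t - d) ^ 2))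
  have hψ : Continuous ψ := by fun_prop
  have support : Function.support (fun t ↦ ENNReal.ofReal (ψ t)) ⊆ Icc (d - r) r := by
    refine Function.support_subset_iff'.2 fun t ht ↦ ?_
    rw [mem_Icc, not_and_or, not_le, not_le] at ht
    refine ENNReal.ofReal_eq_zero.2 (mul_nonpos_of_nonneg_of_nonpos pi_pos.le ?_)
    rcases ht with ht | ht
    · nlinarith [le_max_right (t ^ 2) ((t - d) ^ 2)]
    · nlinarith [le_max_left (t ^ 2) ((t - d) ^ 2)]
  have nonneg : ∀ t ∈ Icc (d - r) r, 0 ≤ ψ t := fun t ⟨h₁, h₂⟩ ↦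
    mul_nonneg pi_pos.le (sub_nonneg.2 (max_le (by nlinarith) (by nlinarith)))
  have right_half : ∀ t ∈ uIcc (d / 2) r, ψ t = π * (r ^ 2 - t ^ 2) := by
    intro t ht
    rw [uIcc_of_le (by linarith)] at ht
    simp only [ψ, max_eq_left (show (t - d) ^ 2 ≤ t ^ 2 by nlinarith [ht.1])]
  have left_half : ∀ t ∈ uIcc (d - r) (d / 2), ψ t = π * (r ^ 2 - (d - t) ^ 2) := by
    intro t ht
    rw [uIcc_of_le (by linarith)] at ht
    simp only [ψ, max_eq_right (show t ^ 2 ≤ (t - d) ^ 2 by nlinarith [ht.2])]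
    ring
  rw [← indicator_eq_self.2 support, lintegral_indicator measurableSet_Icc,
    ← ofReal_integral_eq_lintegral_ofReal (hψ.integrableOn_Icc)
      ((ae_restrict_iff' measurableSet_Icc).2 (.of_forall nonneg)),
    integral_Icc_eq_integral_Ioc, ← intervalIntegral.integral_of_le (by linarith),
    ← intervalIntegral.integral_add_adjacent_intervals (hψ.intervalIntegrable _ (d / 2))
      (hψ.intervalIntegrable _ _), intervalIntegral.integral_congr left_half,
    intervalIntegral.integral_congr right_half,
    intervalIntegral.integral_comp_sub_left (fun t ↦ π * (r ^ 2 - t ^ 2))]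
  congr 1
  simp [integral_pow]
  ring

noncomputable def lensVolume (r s : ℝ) : ℝ :=
  if s ≤ 2 * r then π * (4 * r ^ 3 / 3 - r ^ 2 * s + s ^ 3 / 12) else 0

theorem lensVolume_nonneg (r : ℝ) {s : ℝ} (hs : 0 ≤ s) : 0 ≤ lensVolume r s := by
  unfold lensVolume
  split_ifs with h
  · have : 4 * r ^ 3 / 3 - r ^ 2 * s + s ^ 3 / 12 = (2 * r - s) ^ 2 * (4 * r + s) / 12 := by ring
    rw [this]
    have : 0 ≤ 4 * r + s := by linarith
    positivity
  · exact le_rfl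

theorem measurable_lensVolume (r : ℝ) : Measurable (lensVolume r) :=
  Measurable.ite (measurableSet_le measurable_id measurable_const) (by fun_prop) measurable_const

theorem volume_ball_inter_ball (r : ℝ) (z : EuclideanSpace ℝ (Fin 3)) :
    volume (ball 0 r ∩ ball z r) = ENNReal.ofReal (lensVolume r ‖z‖) := by
  unfold lensVolume
  split_ifs with h
  · have hr : 0 ≤ r := by linarith [norm_nonneg z]
    have hz : ‖z‖ = ‖‖z‖ • EuclideanSpace.single (0 : Fin 3) (1 : ℝ)‖ := by simp [norm_smul]
    rw [volume_ball_inter_ball_congr r hz, volume_ball_inter_ball_smul_single hr,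
      lintegral_lens_profile (norm_nonneg z) h]
  · have hdisj : Disjoint (ball 0 r) (ball z r) :=
      ball_disjoint_ball (by rw [dist_zero_left]; linarith)
    simp [hdisj.inter_eq]

/-- The covariance `B(d) = 2 (1 - cos (a d)) / d²`, extended continuously by `B(0) = a²`. -/
noncomputable def bandLimitedCov (a s : ℝ) : ℝ :=
  if s = 0 then a ^ 2 else 2 * (1 - cos (a * s)) / s ^ 2

theorem bandLimitedCov_nonneg (a s : ℝ) : 0 ≤ bandLimitedCov a s := by
  unfold bandLimitedCov
  split_ifs
  · positivity
  · have := cos_le_one (a * s)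
    have : 0 ≤ 1 - cos (a * s) := by linarith
    positivity

theorem bandLimitedCov_le_sq (a s : ℝ) : bandLimitedCov a s ≤ a ^ 2 := by
  unfold bandLimitedCov
  split_ifs with hs
  · exact le_rfl
  · rw [div_le_iff₀ (by positivity)]
    nlinarith [one_sub_sq_div_two_le_cos (x := a * s)]

theorem measurable_bandLimitedCov (a : ℝ) : Measurable (bandLimitedCov a) :=
  Measurable.ite (measurableSet_singleton 0) measurable_const (by fun_prop)

theorem intervalIntegral_one_sub_cos_mul_lens {a : ℝ} (ha : a ≠ 0) (r : ℝ) :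
    ∫ y in (0 : ℝ)..2 * r,
        2 * (1 - cos (a * y)) * (π * (4 * r ^ 3 / 3 - r ^ 2 * y + y ^ 3 / 12)) =
      π / a ^ 4 * (2 * r ^ 4 * a ^ 4 - 2 * r ^ 2 * a ^ 2 + 2 * a * r * sin (2 * a * r) - 1 +
        cos (2 * a * r)) := by
  -- `P` is a primitive of the cubic `p(y)`; `Q`, a primitive of `p(y) cos (a y)`, comes from
  -- integrating by parts three times.
  let P : ℝ → ℝ := fun y ↦ 4 * r ^ 3 / 3 * y - r ^ 2 * y ^ 2 / 2 + y ^ 4 / 48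
  let Q : ℝ → ℝ := fun y ↦ (4 * r ^ 3 / 3 - r ^ 2 * y + y ^ 3 / 12) * sin (a * y) / a +
    (y ^ 2 / 4 - r ^ 2) * cos (a * y) / a ^ 2 - y / 2 * sin (a * y) / a ^ 3 -
    cos (a * y) / (2 * a ^ 4)
  have hderiv (y : ℝ) : HasDerivAt (fun y ↦ 2 * π * (P y - Q y))
      (2 * (1 - cos (a * y)) * (π * (4 * r ^ 3 / 3 - r ^ 2 * y + y ^ 3 / 12))) y := by
    have hay : HasDerivAt (fun y ↦ a * y) a y := by simpa using (hasDerivAt_id y).const_mul a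
    have hsin := hay.sin
    have hcos := hay.cos
    have hP : HasDerivAt P (4 * r ^ 3 / 3 - r ^ 2 * y + y ^ 3 / 12) y := by
      refine ((((hasDerivAt_id y).const_mul (4 * r ^ 3 / 3)).sub
        (((hasDerivAt_pow 2 y).const_mul (r ^ 2)).div_const 2)).add
        ((hasDerivAt_pow 4 y).div_const 48)).congr_deriv ?_
      norm_num
      ring
    have hQ : HasDerivAt Q ((4 * r ^ 3 / 3 - r ^ 2 * y + y ^ 3 / 12) * cos (a * y)) y := by
      have hp := (((hasDerivAt_id y).const_mul (r ^ 2)).const_sub (4 * r ^ 3 / 3)).add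
        ((hasDerivAt_pow 3 y).div_const 12)
      have hp' := ((hasDerivAt_pow 2 y).div_const 4).sub_const (r ^ 2)
      refine (((((hp.mul hsin).div_const a).add ((hp'.mul hcos).div_const (a ^ 2))).sub
        ((((hasDerivAt_id y).div_const 2).mul hsin).div_const (a ^ 3))).sub
        (hcos.div_const (2 * a ^ 4))).congr_deriv ?_
      norm_num
      field_simp
      ring
    exact ((hP.sub hQ).const_mul (2 * π)).congr_deriv (by ring)
  rw [intervalIntegral.integral_eq_sub_of_hasDerivAt (fun y _ ↦ hderiv y)
    (Continuous.intervalIntegrable (by fun_prop) _ _)]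
  simp only [P, Q, mul_zero, sin_zero, cos_zero, show a * (2 * r) = 2 * a * r by ring]
  field_simp
  ring

theorem integral_Ioi_sq_mul_bandLimitedCov_mul_lensVolume {a : ℝ} (ha : a ≠ 0) {r : ℝ}
    (hr : 0 ≤ r) :
    ∫ y in Ioi (0 : ℝ), y ^ 2 * (bandLimitedCov a y * lensVolume r y) =
      π / a ^ 4 * (2 * r ^ 4 * a ^ 4 - 2 * r ^ 2 * a ^ 2 + 2 * a * r * sin (2 * a * r) - 1 +
        cos (2 * a * r)) := by
  have hcongr : ∀ y ∈ Ioi (0 : ℝ), y ^ 2 * (bandLimitedCov a y * lensVolume r y) =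
      (Iic (2 * r)).indicator
        (fun y ↦ 2 * (1 - cos (a * y)) * (π * (4 * r ^ 3 / 3 - r ^ 2 * y + y ^ 3 / 12))) y := by
    intro y (hy : 0 < y)
    unfold bandLimitedCov lensVolume
    by_cases h : y ≤ 2 * r
    · simp only [hy.ne', h, if_false, if_true, indicator_of_mem (show y ∈ Iic (2 * r) from h)]
      field_simp
    · simp [h]
  rw [setIntegral_congr_fun measurableSet_Ioi hcongr, setIntegral_indicator measurableSet_Iic,
    Ioi_inter_Iic, ← intervalIntegral.integral_of_le (by linarith),
    intervalIntegral_one_sub_cos_mul_lens ha]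

theorem integral_ball_integral_ball_eq_integral_mul_lensVolume {K : ℝ → ℝ} (hK : Measurable K)
    (hK_nonneg : ∀ s, 0 ≤ K s) {C : ℝ} (hKC : ∀ s, K s ≤ C) (r : ℝ) :
    ∫ x in ball (0 : EuclideanSpace ℝ (Fin 3)) r, ∫ y in ball 0 r, K ‖x - y‖ =
      ∫ w : EuclideanSpace ℝ (Fin 3), K ‖w‖ * lensVolume r ‖w‖ := by
  have hKn : Measurable fun w : EuclideanSpace ℝ (Fin 3) ↦ K ‖w‖ := hK.comp measurable_norm
  have hball (w : EuclideanSpace ℝ (Fin 3)) : (· - w) ⁻¹' ball 0 r = ball w r := by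
    ext x; simp [dist_eq_norm]
  have : IsFiniteMeasure (volume.restrict (ball (0 : EuclideanSpace ℝ (Fin 3)) r)) :=
    isFiniteMeasure_restrict.2 measure_ball_lt_top.ne
  rw [integral_integral_eq_toReal_lintegral_lintegral (f := fun x y ↦ K ‖x - y‖)
      (hKn.comp measurable_sub) (fun _ _ ↦ hK_nonneg _) (fun _ _ ↦ hKC _),
    lintegral_lintegral_sub_eq volume measurableSet_ball
      (k := fun w ↦ ENNReal.ofReal (K ‖w‖)) (ENNReal.measurable_ofReal.comp hKn)]
  simp only [hball, volume_ball_inter_ball, ← ENNReal.ofReal_mul (hK_nonneg _)]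
  exact (integral_eq_lintegral_of_nonneg_ae
    (.of_forall fun w ↦ mul_nonneg (hK_nonneg _) (lensVolume_nonneg r (norm_nonneg w)))
    ((hK.mul (measurable_lensVolume r)).comp measurable_norm).aestronglyMeasurable).symm

theorem ball_variance_example (a r : ℝ) (ha : 0 < a) (hr : 0 < r) :
    (∫ x in Metric.ball (0 : EuclideanSpace ℝ (Fin 3)) r,
        ∫ y in Metric.ball (0 : EuclideanSpace ℝ (Fin 3)) r,
          if x = y then a ^ 2 else 2 * (1 - Real.cos (a * ‖x - y‖)) / ‖x - y‖ ^ 2) =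
      4 * π ^ 2 / a ^ 4 *
        (2 * r ^ 4 * a ^ 4 - 2 * r ^ 2 * a ^ 2 + 2 * a * r * Real.sin (2 * a * r) - 1 +
          Real.cos (2 * a * r)) := by
  have hintegrand (x y : EuclideanSpace ℝ (Fin 3)) :
      (if x = y then a ^ 2 else 2 * (1 - cos (a * ‖x - y‖)) / ‖x - y‖ ^ 2) =
        bandLimitedCov a ‖x - y‖ := by
    simp [bandLimitedCov, sub_eq_zero]
  have hunit : volume.real (ball (0 : EuclideanSpace ℝ (Fin 3)) 1) = π * 4 / 3 := by
    simp only [measureReal_def, EuclideanSpace.volume_ball_fin_three, ENNReal.ofReal_one, one_pow,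
      one_mul]
    exact ENNReal.toReal_ofReal (by positivity)
  simp only [hintegrand]
  rw [integral_ball_integral_ball_eq_integral_mul_lensVolume (measurable_bandLimitedCov a)
      (bandLimitedCov_nonneg a) (bandLimitedCov_le_sq a),
    integral_fun_norm_addHaar volume (fun s ↦ bandLimitedCov a s * lensVolume r s),
    finrank_euclideanSpace_fin, hunit]
  simp only [smul_eq_mul, nsmul_eq_mul, Nat.add_one_sub_one,
    integral_Ioi_sq_mul_bandLimitedCov_mul_lensVolume ha.ne' hr.le]
  field_simp
  ring
end
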